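/- Let (X,b,c,m) be a weighted graph, E a Hermitian vector bundle over X with unitary connection Φ, and W a pointwise positive bundle endomorphism such that ⟨W(x)v,v⟩_x ≥ c(x)|v|²_x for all x ∈ X and v ∈ E_x. If the space C_c(X) of finitely supported functions is dense in the domain of Q^(N)_{b,c} with respect to the form norm of Q^(N)_{b,c} (i.e. Q^(D)_{b,c} = Q^(N)_{b,c}), then the space Γ_c(X;E) of finitely supported sections is dense in the domain of Q^(N)_{Φ,b,W} with respect to the form norm of Q^(N)_{Φ,b,W} (i.e. Q^(D)_{Φ,b,W} = Q^(N)_{Φ,b,W}). -/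

import Mathlib

open scoped ENNReal ComplexInnerProductSpace Classical

noncomputable section

/-- `u` is an `ℓ²`-section with respect to the vertex measure `m`. -/
def MemL2Sec {X : Type*} {E : X → Type*} [∀ x, NormedAddCommGroup (E x)]
    (m : X → ℝ) (u : ∀ x, E x) : Prop :=
  Summable fun x => ‖u x‖ ^ 2 * m x

/-- The magnetic Schrödinger energy `Q̃_{Φ,b,W}(u) ∈ [0,∞]` of a section `u`. -/
def magEnergy {X : Type*} {E : X → Type*} [∀ x, NormedAddCommGroup (E x)]
    [∀ x, InnerProductSpace ℂ (E x)]
    (b : X → X → ℝ) (Φ : ∀ x y, E y ≃ₗᵢ[ℂ] E x) (W : ∀ x, E x →ₗ[ℂ] E x)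
    (u : ∀ x, E x) : ℝ≥0∞ :=
  1 / 2 * ∑' p : X × X, ENNReal.ofReal (b p.1 p.2 * ‖u p.1 - Φ p.1 p.2 (u p.2)‖ ^ 2)
    + ∑' x, ENNReal.ofReal (⟪W x (u x), u x⟫).re

/-- The scalar Schrödinger energy `Q̃_{b,c}(f) ∈ [0,∞]` of a function `f : X → ℂ`. -/
def scalEnergy {X : Type*} (b : X → X → ℝ) (c : X → ℝ) (f : X → ℂ) : ℝ≥0∞ :=
  1 / 2 * ∑' p : X × X, ENNReal.ofReal (b p.1 p.2 * ‖f p.1 - f p.2‖ ^ 2)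
    + ∑' x, ENNReal.ofReal (c x * ‖f x‖ ^ 2)

/-- Membership in the domain of the Neumann magnetic form `Q^(N)_{Φ,b,W}`. -/
def inMagDom {X : Type*} {E : X → Type*} [∀ x, NormedAddCommGroup (E x)]
    [∀ x, InnerProductSpace ℂ (E x)] (m : X → ℝ)
    (b : X → X → ℝ) (Φ : ∀ x y, E y ≃ₗᵢ[ℂ] E x) (W : ∀ x, E x →ₗ[ℂ] E x)
    (u : ∀ x, E x) : Prop :=
  MemL2Sec m u ∧ magEnergy b Φ W u < ⊤

/-- Membership in the domain of the Neumann scalar form `Q^(N)_{b,c}`. -/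
def inScalDom {X : Type*} (m : X → ℝ) (b : X → X → ℝ) (c : X → ℝ) (f : X → ℂ) : Prop :=
  (Summable fun x => ‖f x‖ ^ 2 * m x) ∧ scalEnergy b c f < ⊤

end

noncomputable section

/-- The squared form norm `‖u‖² + Q̃_{Φ,b,W}(u)` of the magnetic form, valued in `[0,∞]`. -/
def magFormNormSq {X : Type*} {E : X → Type*} [∀ x, NormedAddCommGroup (E x)]
    [∀ x, InnerProductSpace ℂ (E x)] (m : X → ℝ)
    (b : X → X → ℝ) (Φ : ∀ x y, E y ≃ₗᵢ[ℂ] E x) (W : ∀ x, E x →ₗ[ℂ] E x)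
    (u : ∀ x, E x) : ℝ≥0∞ :=
  (∑' x, ENNReal.ofReal (‖u x‖ ^ 2 * m x)) + magEnergy b Φ W u

/-- The squared form norm `‖f‖² + Q̃_{b,c}(f)` of the scalar form, valued in `[0,∞]`. -/
def scalFormNormSq {X : Type*} (m : X → ℝ) (b : X → X → ℝ) (c : X → ℝ)
    (f : X → ℂ) : ℝ≥0∞ :=
  (∑' x, ENNReal.ofReal (‖f x‖ ^ 2 * m x)) + scalEnergy b c f

end

/-! Kato's inequality `| |u(x)| - |u(y)| | ≤ |u(x) - Φ_{x,y} u(y)|` and `W ≥ c` put `|u|` into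
the domain of the scalar form, so `|u|` is approximated by finitely supported `g_n`. Put
`h_n = |u| - g_n` and clip `u` pointwise to norm at most `|h_n|`, i.e. replace it by `φ_n u` with
`φ_n = min(1, |h_n| / |u|)`; then `u - φ_n u` vanishes wherever `g_n` does. The `ℓ²`-norm of
`φ_n u` is at most that of `h_n`, and
`|φ_n(x) u(x) - Φ_{x,y} φ_n(y) u(y)|`
  `≤ |h_n(x) - h_n(y)| + 2 (φ_n(x) + φ_n(y)) |u(x) - Φ_{x,y} u(y)|`.
Since `h_n → 0` pointwise, so does `φ_n`, and the remaining terms of the energy of `φ_n u`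
vanish in the limit by dominated convergence. -/

open Filter Topology

/-- `clipFactor r ‖U‖ • U` is `U` shortened to norm at most `r`. Since `r / 0 = 0`,
`clipFactor r 0 = 0`, so the factor tends to `0` wherever `r` does. -/
noncomputable def clipFactor (r s : ℝ) : ℝ := min 1 (r / s)

lemma clipFactor_nonneg {r s : ℝ} (hr : 0 ≤ r) (hs : 0 ≤ s) : 0 ≤ clipFactor r s :=
  le_min zero_le_one (div_nonneg hr hs)

lemma clipFactor_le_one (r s : ℝ) : clipFactor r s ≤ 1 := min_le_left _ _

@[simp]
lemma clipFactor_zero_right (r : ℝ) : clipFactor r 0 = 0 := by simp [clipFactor]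

lemma clipFactor_eq_one {r s : ℝ} (hs : 0 < s) (h : s ≤ r) : clipFactor r s = 1 :=
  min_eq_left ((one_le_div hs).2 h)

lemma clipFactor_mul_of_pos (r : ℝ) {s : ℝ} (hs : 0 < s) : clipFactor r s * s = min s r := by
  rw [clipFactor, min_mul_of_nonneg _ _ hs.le, one_mul, div_mul_cancel₀ _ hs.ne']

lemma clipFactor_mul_le {r s : ℝ} (hr : 0 ≤ r) (hs : 0 ≤ s) : clipFactor r s * s ≤ r := by
  rcases hs.eq_or_lt with rfl | hs
  · simpa using hr
  · exact (clipFactor_mul_of_pos r hs).trans_le (min_le_right _ _)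

lemma tendsto_clipFactor_zero {ι : Type*} {l : Filter ι} {r : ι → ℝ} (hr : Tendsto r l (𝓝 0))
    (s : ℝ) : Tendsto (fun i => clipFactor (r i) s) l (𝓝 0) := by
  have hcont : Continuous fun r : ℝ => clipFactor r s := by unfold clipFactor; fun_prop
  simpa [Function.comp_def, clipFactor] using (hcont.tendsto 0).comp hr

lemma abs_clipFactor_sub_mul_le {a b A B : ℝ} (ha : 0 ≤ a) (hA : 0 < A) (hB : 0 ≤ B) :
    |clipFactor a A - clipFactor b B| * B ≤ |a - b| + clipFactor a A * |A - B| := by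
  have hs0 := clipFactor_nonneg ha hA.le
  rcases hB.eq_or_lt with rfl | hB
  · simpa using add_nonneg (abs_nonneg (a - b)) (mul_nonneg hs0 (abs_nonneg A))
  set s := clipFactor a A
  have hs1 := clipFactor_le_one a A
  have hsA : s * A = min A a := clipFactor_mul_of_pos a hA
  have htB : clipFactor b B * B = min B b := clipFactor_mul_of_pos b hB
  have h1 : s * (B - A) ≤ s * |A - B| := by
    rw [abs_sub_comm]; exact mul_le_mul_of_nonneg_left (le_abs_self _) hs0
  have h2 : s * (A - B) ≤ s * |A - B| := mul_le_mul_of_nonneg_left (le_abs_self _) hs0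
  rw [← abs_of_pos hB, ← abs_mul, abs_of_pos hB, sub_mul, htB, abs_le]
  have hab := le_abs_self (a - b)
  have hba := neg_abs_le (a - b)
  constructor
  · rcases min_cases A a with ⟨hm, _⟩ | ⟨hm, _⟩
    · have hs : s = 1 := by nlinarith
      rw [hs]
      rcases min_cases B b with ⟨hm', _⟩ | ⟨hm', _⟩ <;> nlinarith
    · rcases min_cases B b with ⟨hm', _⟩ | ⟨hm', _⟩ <;> nlinarith
  · rcases min_cases B b with ⟨hm', _⟩ | ⟨hm', _⟩
    · nlinarith
    · rcases min_cases A a with ⟨hm, _⟩ | ⟨hm, _⟩ <;> nlinarith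

lemma norm_clipFactor_smul_sub_le {𝕜 F : Type*} [RCLike 𝕜] [NormedAddCommGroup F]
    [NormedSpace 𝕜 F] {a b : ℝ} (ha : 0 ≤ a) (hb : 0 ≤ b) (U V : F) :
    ‖(clipFactor a ‖U‖ : 𝕜) • U - (clipFactor b ‖V‖ : 𝕜) • V‖
      ≤ |a - b| + 2 * (clipFactor a ‖U‖ + clipFactor b ‖V‖) * ‖U - V‖ := by
  set s := clipFactor a ‖U‖
  set t := clipFactor b ‖V‖
  have hs : 0 ≤ s := clipFactor_nonneg ha (norm_nonneg U)
  have ht : 0 ≤ t := clipFactor_nonneg hb (norm_nonneg V)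
  rcases eq_or_ne U 0 with rfl | hU
  · have hs0 : s = 0 := by simp [s]
    rw [hs0, RCLike.ofReal_zero, zero_smul, zero_sub, norm_neg, zero_sub, norm_neg, norm_smul,
      RCLike.norm_ofReal, abs_of_nonneg ht]
    nlinarith [abs_nonneg (a - b), mul_nonneg ht (norm_nonneg V)]
  have hdec : (s : 𝕜) • U - (t : 𝕜) • V = (s : 𝕜) • (U - V) + ((s - t : ℝ) : 𝕜) • V := by
    push_cast; rw [smul_sub, sub_smul]; abel
  calc ‖(s : 𝕜) • U - (t : 𝕜) • V‖ ≤ s * ‖U - V‖ + |s - t| * ‖V‖ := by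
        rw [hdec]
        refine (norm_add_le _ _).trans_eq ?_
        rw [norm_smul, norm_smul, RCLike.norm_ofReal, RCLike.norm_ofReal, abs_of_nonneg hs]
    _ ≤ s * ‖U - V‖ + (|a - b| + s * |‖U‖ - ‖V‖|) := by
        gcongr; exact abs_clipFactor_sub_mul_le ha (norm_pos_iff.2 hU) (norm_nonneg V)
    _ ≤ |a - b| + 2 * (s + t) * ‖U - V‖ := by
        nlinarith [mul_le_mul_of_nonneg_left (abs_norm_sub_norm_le U V) hs,
          mul_nonneg ht (norm_nonneg (U - V))]

lemma tendsto_tsum_ofReal_of_dominated {α : Type*} {F : ℕ → α → ℝ} {G : α → ℝ}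
    (hF : ∀ n x, 0 ≤ F n x) (hFG : ∀ n x, F n x ≤ G x) (hG : ∑' x, ENNReal.ofReal (G x) ≠ ⊤)
    (hlim : ∀ x, Tendsto (fun n => F n x) atTop (𝓝 0)) :
    Tendsto (fun n => ∑' x, ENNReal.ofReal (F n x)) atTop (𝓝 0) := by
  have hG0 : ∀ x, 0 ≤ G x := fun x => (hF 0 x).trans (hFG 0 x)
  have hGsum : Summable G :=
    (ENNReal.summable_toReal hG).congr fun x => ENNReal.toReal_ofReal (hG0 x)
  have hreal : Tendsto (fun n => ∑' x, F n x) atTop (𝓝 0) := by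
    simpa using tendsto_tsum_of_dominated_convergence hGsum hlim
      (Eventually.of_forall fun n x => by rw [Real.norm_of_nonneg (hF n x)]; exact hFG n x)
  simpa [ENNReal.ofReal_tsum_of_nonneg (hF _) (hGsum.of_nonneg_of_le (hF _) (hFG _))] using
    ENNReal.tendsto_ofReal hreal

lemma tendsto_norm_apply_of_tendsto_tsum {X F : Type*} [NormedAddCommGroup F] {m : X → ℝ}
    {f : ℕ → X → F} {x : X} (hm : 0 < m x)
    (hf : Tendsto (fun n => ∑' y, ENNReal.ofReal (‖f n y‖ ^ 2 * m y)) atTop (𝓝 0)) :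
    Tendsto (fun n => ‖f n x‖) atTop (𝓝 0) := by
  have hterm : Tendsto (fun n => ENNReal.ofReal (‖f n x‖ ^ 2 * m x)) atTop (𝓝 0) :=
    tendsto_of_tendsto_of_tendsto_of_le_of_le tendsto_const_nhds hf (fun _ => zero_le)
      fun n => ENNReal.le_tsum x
  have hsq : Tendsto (fun n => ‖f n x‖ ^ 2 * m x) atTop (𝓝 0) := by
    have h := (ENNReal.tendsto_toReal ENNReal.zero_ne_top).comp hterm
    rw [ENNReal.toReal_zero] at h
    exact h.congr fun n => ENNReal.toReal_ofReal (by positivity)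
  simpa [hm.ne', Real.sqrt_sq (norm_nonneg _)] using (hsq.div_const (m x)).sqrt

noncomputable def clipSection {X : Type*} {E : X → Type*} [∀ x, NormedAddCommGroup (E x)]
    [∀ x, NormedSpace ℂ (E x)] (r : X → ℝ) (u : ∀ x, E x) : ∀ x, E x :=
  fun x => (clipFactor (r x) ‖u x‖ : ℂ) • u x

section ClipSection

variable {X : Type*} {E : X → Type*} [∀ x, NormedAddCommGroup (E x)]

lemma norm_clipSection [∀ x, NormedSpace ℂ (E x)] {r : X → ℝ} (hr : ∀ x, 0 ≤ r x)
    (u : ∀ x, E x) (x : X) : ‖clipSection r u x‖ = clipFactor (r x) ‖u x‖ * ‖u x‖ := by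
  rw [clipSection, norm_smul, Complex.norm_real, Real.norm_of_nonneg
    (clipFactor_nonneg (hr x) (norm_nonneg _))]

lemma clipSection_apply_of_norm_le [∀ x, NormedSpace ℂ (E x)] {r : X → ℝ} {u : ∀ x, E x}
    {x : X} (h : ‖u x‖ ≤ r x) : clipSection r u x = u x := by
  rcases (norm_nonneg (u x)).eq_or_lt with h0 | h0
  · rw [clipSection, norm_eq_zero.1 h0.symm, smul_zero]
  · rw [clipSection, clipFactor_eq_one h0 h, Complex.ofReal_one, one_smul]

variable [∀ x, InnerProductSpace ℂ (E x)]

lemma inner_clipSection_re {r : X → ℝ} (W : ∀ x, E x →ₗ[ℂ] E x) (u : ∀ x, E x) (x : X) :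
    (⟪W x (clipSection r u x), clipSection r u x⟫).re
      = clipFactor (r x) ‖u x‖ ^ 2 * (⟪W x (u x), u x⟫).re := by
  rw [clipSection, map_smul, inner_smul_left, inner_smul_right, Complex.conj_ofReal,
    ← mul_assoc, ← Complex.ofReal_mul, Complex.re_ofReal_mul, sq]

lemma norm_clipSection_sub_le {r : X → ℝ} (hr : ∀ x, 0 ≤ r x) (Φ : ∀ x y, E y ≃ₗᵢ[ℂ] E x)
    (u : ∀ x, E x) (x y : X) :
    ‖clipSection r u x - Φ x y (clipSection r u y)‖
      ≤ |r x - r y| + 2 * (clipFactor (r x) ‖u x‖ + clipFactor (r y) ‖u y‖)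
          * ‖u x - Φ x y (u y)‖ := by
  have h := norm_clipFactor_smul_sub_le (𝕜 := ℂ) (hr x) (hr y) (u x) (Φ x y (u y))
  rwa [LinearIsometryEquiv.norm_map, ← LinearIsometryEquiv.map_smul] at h

end ClipSection

section MagneticForm

variable {X : Type*} {E : X → Type*} [∀ x, NormedAddCommGroup (E x)]
  [∀ x, InnerProductSpace ℂ (E x)] {b : X → X → ℝ} {c : X → ℝ} {m : X → ℝ}
  {Φ : ∀ x y, E y ≃ₗᵢ[ℂ] E x} {W : ∀ x, E x →ₗ[ℂ] E x}

lemma scalEnergy_norm_le_magEnergy (hb : ∀ x y, 0 ≤ b x y)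
    (hW : ∀ x (w : E x), c x * ‖w‖ ^ 2 ≤ (⟪W x w, w⟫).re) (u : ∀ x, E x) :
    scalEnergy b c (fun x => (‖u x‖ : ℂ)) ≤ magEnergy b Φ W u := by
  unfold scalEnergy magEnergy
  gcongr with p x
  · exact hb _ _
  · rw [← Complex.ofReal_sub, Complex.norm_real, Real.norm_eq_abs,
      ← (Φ p.1 p.2).norm_map (u p.2)]
    exact abs_norm_sub_norm_le _ _
  · simpa using hW x (u x)

lemma inScalDom_norm_of_inMagDom (hb : ∀ x y, 0 ≤ b x y)
    (hW : ∀ x (w : E x), c x * ‖w‖ ^ 2 ≤ (⟪W x w, w⟫).re) {u : ∀ x, E x}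
    (hu : inMagDom m b Φ W u) : inScalDom m b c (fun x => (‖u x‖ : ℂ)) :=
  ⟨hu.1.congr fun x => by simp, (scalEnergy_norm_le_magEnergy hb hW u).trans_lt hu.2⟩

lemma magFormNormSq_clipSection_le (hb : ∀ x y, 0 ≤ b x y) (hm : ∀ x, 0 ≤ m x)
    (u : ∀ x, E x) (f : X → ℂ) :
    magFormNormSq m b Φ W (clipSection (fun x => ‖f x‖) u)
      ≤ 3 * scalFormNormSq m b c f
        + ∑' p : X × X, ENNReal.ofReal (8 * (clipFactor ‖f p.1‖ ‖u p.1‖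
            + clipFactor ‖f p.2‖ ‖u p.2‖) ^ 2 * (b p.1 p.2 * ‖u p.1 - Φ p.1 p.2 (u p.2)‖ ^ 2))
        + ∑' x, ENNReal.ofReal (clipFactor ‖f x‖ ‖u x‖ ^ 2 * (⟪W x (u x), u x⟫).re) := by
  set t : X → ℝ := fun x => clipFactor ‖f x‖ ‖u x‖
  set v := clipSection (fun x => ‖f x‖) u
  have hr : ∀ x, 0 ≤ ‖f x‖ := fun x => norm_nonneg _
  have hl2 : ∑' x, ENNReal.ofReal (‖v x‖ ^ 2 * m x) ≤ scalFormNormSq m b c f := by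
    refine le_trans (ENNReal.tsum_le_tsum fun x => ?_) le_self_add
    gcongr
    · exact hm x
    · rw [norm_clipSection hr]
      exact clipFactor_mul_le (hr x) (norm_nonneg _)
  have hedge : ∀ p : X × X, b p.1 p.2 * ‖v p.1 - Φ p.1 p.2 (v p.2)‖ ^ 2
      ≤ 2 * (b p.1 p.2 * ‖f p.1 - f p.2‖ ^ 2)
        + 8 * (t p.1 + t p.2) ^ 2 * (b p.1 p.2 * ‖u p.1 - Φ p.1 p.2 (u p.2)‖ ^ 2) := by
    intro p
    set D := ‖u p.1 - Φ p.1 p.2 (u p.2)‖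
    have h := norm_clipSection_sub_le hr Φ u p.1 p.2
    have hd := abs_norm_sub_norm_le (f p.1) (f p.2)
    have hsq : ‖v p.1 - Φ p.1 p.2 (v p.2)‖ ^ 2
        ≤ 2 * ‖f p.1 - f p.2‖ ^ 2 + 8 * (t p.1 + t p.2) ^ 2 * D ^ 2 := by
      nlinarith [sq_nonneg (|‖f p.1‖ - ‖f p.2‖| - 2 * (t p.1 + t p.2) * D),
        norm_nonneg (v p.1 - Φ p.1 p.2 (v p.2)), abs_nonneg (‖f p.1‖ - ‖f p.2‖)]
    nlinarith [mul_le_mul_of_nonneg_left hsq (hb p.1 p.2)]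
  have hedge_sum : ∑' p : X × X, ENNReal.ofReal (b p.1 p.2 * ‖v p.1 - Φ p.1 p.2 (v p.2)‖ ^ 2)
      ≤ 2 * ∑' p : X × X, ENNReal.ofReal (b p.1 p.2 * ‖f p.1 - f p.2‖ ^ 2)
        + ∑' p : X × X, ENNReal.ofReal (8 * (t p.1 + t p.2) ^ 2
            * (b p.1 p.2 * ‖u p.1 - Φ p.1 p.2 (u p.2)‖ ^ 2)) := by
    rw [← ENNReal.tsum_mul_left, ← ENNReal.tsum_add]
    refine ENNReal.tsum_le_tsum fun p => (ENNReal.ofReal_le_ofReal (hedge p)).trans ?_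
    refine ENNReal.ofReal_add_le.trans_eq ?_
    rw [ENNReal.ofReal_mul zero_le_two, ENNReal.ofReal_ofNat]
  have hpot : ∑' x, ENNReal.ofReal (⟪W x (v x), v x⟫).re
      = ∑' x, ENNReal.ofReal (t x ^ 2 * (⟪W x (u x), u x⟫).re) :=
    tsum_congr fun x => by rw [inner_clipSection_re]
  have hhalf : 1 / 2 * ∑' p : X × X, ENNReal.ofReal (b p.1 p.2 * ‖f p.1 - f p.2‖ ^ 2)
      ≤ scalFormNormSq m b c f := le_self_add.trans le_add_self
  unfold magFormNormSq magEnergy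
  rw [hpot]
  set S := scalFormNormSq m b c f
  set Pf := ∑' p : X × X, ENNReal.ofReal (b p.1 p.2 * ‖f p.1 - f p.2‖ ^ 2)
  set T := ∑' p : X × X, ENNReal.ofReal (8 * (t p.1 + t p.2) ^ 2
    * (b p.1 p.2 * ‖u p.1 - Φ p.1 p.2 (u p.2)‖ ^ 2))
  set R := ∑' x, ENNReal.ofReal (t x ^ 2 * (⟪W x (u x), u x⟫).re)
  calc _ ≤ S + (1 / 2 * (2 * Pf + T) + R) := by gcongr
    _ = S + (2 * (1 / 2 * Pf) + 1 / 2 * T + R) := by rw [mul_add, mul_left_comm]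
    _ ≤ S + (2 * S + T + R) := by
        gcongr
        exact mul_le_of_le_one_left' (by norm_num)
    _ = 3 * S + T + R := by ring

theorem tendsto_magFormNormSq_clipSection (hb : ∀ x y, 0 ≤ b x y) (hm : ∀ x, 0 < m x)
    (hW : ∀ x (w : E x), 0 ≤ (⟪W x w, w⟫).re) {u : ∀ x, E x} (hu : magEnergy b Φ W u < ⊤)
    {f : ℕ → X → ℂ} (hf : Tendsto (fun n => scalFormNormSq m b c (f n)) atTop (𝓝 0)) :
    Tendsto (fun n => magFormNormSq m b Φ W (clipSection (fun x => ‖f n x‖) u)) atTop (𝓝 0) := by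
  obtain ⟨hEdge, hPot⟩ := ENNReal.add_lt_top.1 hu
  set t : ℕ → X → ℝ := fun n x => clipFactor ‖f n x‖ ‖u x‖
  have ht0 : ∀ n x, 0 ≤ t n x := fun n x => clipFactor_nonneg (norm_nonneg _) (norm_nonneg _)
  have ht1 : ∀ n x, t n x ≤ 1 := fun n x => clipFactor_le_one _ _
  have htlim : ∀ x, Tendsto (fun n => t n x) atTop (𝓝 0) := by
    refine fun x => tendsto_clipFactor_zero (tendsto_norm_apply_of_tendsto_tsum (hm x) ?_) _
    exact tendsto_of_tendsto_of_tendsto_of_le_of_le tendsto_const_nhds hf (fun _ => zero_le)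
      fun n => le_self_add
  have hT : Tendsto (fun n => ∑' p : X × X, ENNReal.ofReal (8 * (t n p.1 + t n p.2) ^ 2
      * (b p.1 p.2 * ‖u p.1 - Φ p.1 p.2 (u p.2)‖ ^ 2))) atTop (𝓝 0) := by
    refine tendsto_tsum_ofReal_of_dominated
      (G := fun p => 32 * (b p.1 p.2 * ‖u p.1 - Φ p.1 p.2 (u p.2)‖ ^ 2))
      (fun n p => by have := hb p.1 p.2; positivity) (fun n p => ?_) ?_ fun p => ?_
    · have h4 : (t n p.1 + t n p.2) ^ 2 ≤ 4 := by
        nlinarith [ht0 n p.1, ht0 n p.2, ht1 n p.1, ht1 n p.2]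
      have := mul_nonneg (hb p.1 p.2) (sq_nonneg ‖u p.1 - Φ p.1 p.2 (u p.2)‖)
      nlinarith
    · simp_rw [ENNReal.ofReal_mul (by norm_num : (0 : ℝ) ≤ 32), ENNReal.tsum_mul_left]
      exact ENNReal.mul_ne_top ENNReal.ofReal_ne_top
        (ENNReal.lt_top_of_mul_ne_top_right hEdge.ne (by norm_num)).ne
    · simpa using (((htlim p.1).add (htlim p.2)).pow 2).const_mul 8 |>.mul_const
        (b p.1 p.2 * ‖u p.1 - Φ p.1 p.2 (u p.2)‖ ^ 2)
  have hR : Tendsto (fun n => ∑' x, ENNReal.ofReal (t n x ^ 2 * (⟪W x (u x), u x⟫).re))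
      atTop (𝓝 0) := by
    refine tendsto_tsum_ofReal_of_dominated (G := fun x => (⟪W x (u x), u x⟫).re)
      (fun n x => mul_nonneg (sq_nonneg _) (hW x (u x))) (fun n x => ?_) hPot.ne fun x => ?_
    · exact mul_le_of_le_one_left (hW x (u x)) (pow_le_one₀ (ht0 n x) (ht1 n x))
    · simpa using ((htlim x).pow 2).mul_const (⟪W x (u x), u x⟫).re
  have hupper :=
    ((ENNReal.Tendsto.const_mul hf (Or.inr (by norm_num : (3 : ℝ≥0∞) ≠ ⊤))).add hT).add hR
  simp only [mul_zero, add_zero] at hupper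
  exact tendsto_of_tendsto_of_tendsto_of_le_of_le tendsto_const_nhds hupper (fun _ => zero_le)
    fun n => magFormNormSq_clipSection_le hb (fun x => (hm x).le) u (f n)

end MagneticForm

theorem stmt2_general {X : Type*}
    (b : X → X → ℝ) (hb0 : ∀ x y, 0 ≤ b x y)
    (c : X → ℝ) (hc : ∀ x, 0 ≤ c x) (m : X → ℝ) (hm : ∀ x, 0 < m x)
    (E : X → Type*) [∀ x, NormedAddCommGroup (E x)] [∀ x, InnerProductSpace ℂ (E x)]
    (Φ : ∀ x y, E y ≃ₗᵢ[ℂ] E x)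
    (W : ∀ x, E x →ₗ[ℂ] E x) (hW : ∀ x (w : E x), c x * ‖w‖ ^ 2 ≤ (⟪W x w, w⟫).re)
    (hdense : ∀ f : X → ℂ, inScalDom m b c f → ∀ ε > (0 : ℝ),
      ∃ g : X → ℂ, (Function.support g).Finite ∧
        scalFormNormSq m b c (f - g) < ENNReal.ofReal ε) :
    ∀ u : ∀ x, E x, inMagDom m b Φ W u → ∀ ε > (0 : ℝ),
      ∃ v : ∀ x, E x, {x | v x ≠ 0}.Finite ∧
        magFormNormSq m b Φ W (u - v) < ENNReal.ofReal ε := by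
  intro u hu ε hε
  set f : X → ℂ := fun x => (‖u x‖ : ℂ)
  choose g hg_fin hg_lt using fun n : ℕ =>
    hdense f (inScalDom_norm_of_inMagDom hb0 hW hu) (1 / (n + 1)) Nat.one_div_pos_of_nat
  have hfg : Tendsto (fun n => scalFormNormSq m b c (f - g n)) atTop (𝓝 0) :=
    tendsto_of_tendsto_of_tendsto_of_le_of_le tendsto_const_nhds
      (by simpa using ENNReal.tendsto_ofReal tendsto_one_div_add_atTop_nhds_zero_nat)
      (fun _ => zero_le) fun n => (hg_lt n).le
  have hWpos : ∀ x (w : E x), 0 ≤ (⟪W x w, w⟫).re := fun x w =>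
    (mul_nonneg (hc x) (sq_nonneg _)).trans (hW x w)
  obtain ⟨n, hn⟩ := ((tendsto_magFormNormSq_clipSection hb0 hm hWpos hu.2 hfg).eventually_lt_const
    (ENNReal.ofReal_pos.2 hε)).exists
  refine ⟨u - clipSection (fun x => ‖(f - g n) x‖) u, (hg_fin n).subset fun x hx => ?_,
    by rwa [sub_sub_cancel]⟩
  contrapose! hx
  rw [Set.mem_ofPred_eq, Pi.sub_apply, not_not, sub_eq_zero]
  exact (clipSection_apply_of_norm_le (by simp [f, Function.notMem_support.1 hx])).symm

/-- For a weighted graph `(X,b,c,m)`, a Hermitian vector bundle `E` with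
unitary connection `Φ` and a pointwise positive bundle endomorphism `W` with
`⟨W(x)v,v⟩ ≥ c(x)|v|²`: if the finitely supported functions are dense in the domain of
`Q^(N)_{b,c}` with respect to its form norm (i.e. `Q^(D)_{b,c} = Q^(N)_{b,c}`), then the
finitely supported sections are dense in the domain of `Q^(N)_{Φ,b,W}` with respect to its
form norm (i.e. `Q^(D)_{Φ,b,W} = Q^(N)_{Φ,b,W}`). -/
theorem stmt2 {X : Type*} [Countable X]
    (b : X → X → ℝ) (hb0 : ∀ x y, 0 ≤ b x y) (hbdiag : ∀ x, b x x = 0)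
    (hbsymm : ∀ x y, b x y = b y x) (hbsum : ∀ x, Summable fun y => b x y)
    (c : X → ℝ) (hc : ∀ x, 0 ≤ c x) (m : X → ℝ) (hm : ∀ x, 0 < m x)
    (E : X → Type*) [∀ x, NormedAddCommGroup (E x)] [∀ x, InnerProductSpace ℂ (E x)]
    [∀ x, FiniteDimensional ℂ (E x)]
    (Φ : ∀ x y, E y ≃ₗᵢ[ℂ] E x) (hΦ : ∀ x y, Φ x y = (Φ y x).symm)
    (W : ∀ x, E x →ₗ[ℂ] E x) (hW : ∀ x (w : E x), c x * ‖w‖ ^ 2 ≤ (⟪W x w, w⟫).re)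
    (hdense : ∀ f : X → ℂ, inScalDom m b c f → ∀ ε > (0 : ℝ),
      ∃ g : X → ℂ, (Function.support g).Finite ∧
        scalFormNormSq m b c (f - g) < ENNReal.ofReal ε) :
    ∀ u : ∀ x, E x, inMagDom m b Φ W u → ∀ ε > (0 : ℝ),
      ∃ v : ∀ x, E x, {x | v x ≠ 0}.Finite ∧
        magFormNormSq m b Φ W (u - v) < ENNReal.ofReal ε :=
  stmt2_general b hb0 c hc m hm E Φ W hW hdense
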